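/- arXiv:2602.22704 — 3 statements merged into one kernel-verified Lean document; each statement's English description precedes it below -/
import Mathlib

section
/- Let L be a finite-dimensional Lie algebra over a field F and let z ∈ L. Then sol_L(z) is the union of all maximal solvable Lie subalgebras of L that contain z; that is, x ∈ sol_L(z) if and only if there exists a Lie subalgebra M of L that is solvable, contains z and x, and is maximal among solvable Lie subalgebras of L. -/
/-- The solvabilizer of `z` in `L`. -/
def solvabilizerElt (F : Type*) {L : Type*} [Field F] [LieRing L] [LieAlgebra F L]
    (z : L) : Set L :=
  {x : L | LieAlgebra.IsSolvable (LieSubalgebra.lieSpan F L {x, z})}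

/-!
A solvable subalgebra containing `x` and `z` contains the subalgebra they generate, so `x ∈ sol_L(z)`
exactly when `x` and `z` lie in a common solvable subalgebra. In finite dimension the subalgebras
satisfy the ascending chain condition, so every solvable subalgebra lies in a maximal solvable one.
-/

namespace LieSubalgebra

variable {R L : Type*} [CommRing R] [LieRing L] [LieAlgebra R L]

lemma isSolvable_of_le {K M : LieSubalgebra R L} (hM : LieAlgebra.IsSolvable M) (h : K ≤ M) :
    LieAlgebra.IsSolvable K :=
  (inclusion_injective h).lieAlgebra_isSolvable

lemma exists_maximal_isSolvable_ge [IsNoetherian R L] {K : LieSubalgebra R L}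
    (hK : LieAlgebra.IsSolvable K) :
    ∃ M : LieSubalgebra R L, K ≤ M ∧
      Maximal (fun N : LieSubalgebra R L ↦ LieAlgebra.IsSolvable N) M :=
  exists_maximal_ge_of_wellFoundedGT _ K hK

end LieSubalgebra

open LieSubalgebra

lemma mem_solvabilizerElt_iff {F L : Type*} [Field F] [LieRing L] [LieAlgebra F L] {z x : L} :
    x ∈ solvabilizerElt F z ↔
      ∃ M : LieSubalgebra F L, LieAlgebra.IsSolvable M ∧ z ∈ M ∧ x ∈ M := by
  constructor
  · intro h
    exact ⟨_, h, subset_lieSpan (by simp), subset_lieSpan (by simp)⟩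
  · rintro ⟨M, hM, hzM, hxM⟩
    exact isSolvable_of_le hM (lieSpan_le.mpr (Set.pair_subset hxM hzM))

/-- `sol_L(z)` is the union of all maximal solvable subalgebras of `L` containing `z`. -/
theorem solvabilizerElt_eq_union_maximal_solvable (F L : Type*) [Field F] [LieRing L]
    [LieAlgebra F L] [Module.Finite F L] (z x : L) :
    x ∈ solvabilizerElt F z ↔
      ∃ M : LieSubalgebra F L, LieAlgebra.IsSolvable M ∧ z ∈ M ∧ x ∈ M ∧
        ∀ N : LieSubalgebra F L, LieAlgebra.IsSolvable N → M ≤ N → M = N := by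
  rw [mem_solvabilizerElt_iff]
  constructor
  · rintro ⟨K, hK, hzK, hxK⟩
    obtain ⟨M, hKM, hmax⟩ := exists_maximal_isSolvable_ge hK
    exact ⟨M, hmax.prop, hKM hzK, hKM hxK, fun N hN hMN ↦ hmax.eq_of_le hN hMN⟩
  · rintro ⟨M, hM, hzM, hxM, -⟩
    exact ⟨M, hM, hzM, hxM⟩
end

section
/- Let L₁ and L₂ be finite-dimensional Lie algebras over a field F and let L = L₁ × L₂ be their direct sum. Then sol(L) = sol(L₁) × sol(L₂); that is, (x₁, x₂) ∈ sol(L₁ × L₂) if and only if x₁ ∈ sol(L₁) and x₂ ∈ sol(L₂). -/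
section ProdLie

variable (F : Type*) (L₁ L₂ : Type*) [Field F] [LieRing L₁] [LieAlgebra F L₁]
  [LieRing L₂] [LieAlgebra F L₂]

/-- The componentwise bracket on the product. -/
instance Prod.instBracketProd : Bracket (L₁ × L₂) (L₁ × L₂) :=
  ⟨fun x y => (⁅x.1, y.1⁆, ⁅x.2, y.2⁆)⟩

@[simp] theorem Prod.bracket_def (x y : L₁ × L₂) :
    ⁅x, y⁆ = (⁅x.1, y.1⁆, ⁅x.2, y.2⁆) := rfl

/-- The direct sum (product) of two Lie rings, with componentwise bracket. -/
instance Prod.instLieRingProd : LieRing (L₁ × L₂) where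
  add_lie x y z := by ext <;> simp [add_lie]
  lie_add x y z := by ext <;> simp [lie_add]
  lie_self x := by ext <;> simp
  leibniz_lie x y z := by
    ext <;> simp only [Prod.bracket_def, Prod.fst_add, Prod.snd_add] <;>
      exact leibniz_lie _ _ _

/-- The direct sum (product) of two Lie algebras. -/
instance Prod.instLieAlgebraProd : LieAlgebra F (L₁ × L₂) where
  lie_smul t x y := by ext <;> simp [lie_smul]

end ProdLie

/-- The solvabilizer of the Lie algebra `L`. -/
def solvabilizerAlg (F L : Type*) [Field F] [LieRing L] [LieAlgebra F L] : Set L :=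
  {x : L | ∀ z : L, LieAlgebra.IsSolvable (LieSubalgebra.lieSpan F L {x, z})}

/-! The projections `L₁ × L₂ → Lᵢ` are surjective and carry the subalgebra generated by `{x, z}`
onto the one generated by the projected pair, so solvability of these subalgebras passes to the
factors. Conversely, a subalgebra of `L₁ × L₂` meets the kernels of the two projections trivially,
and when both its projections are solvable its derived series eventually lies in both kernels. -/

open LieAlgebra

section Solvable

variable {R L L₁ L₂ : Type*} [CommRing R] [LieRing L] [LieAlgebra R L]
  [LieRing L₁] [LieAlgebra R L₁] [LieRing L₂] [LieAlgebra R L₂]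

theorem LieSubalgebra.range_comp_incl (K : LieSubalgebra R L) (f : L →ₗ⁅R⁆ L₁) :
    (f.comp K.incl).range = K.map f := by
  ext y
  simp

instance LieSubalgebra.isSolvable_map (K : LieSubalgebra R L) [IsSolvable K] (f : L →ₗ⁅R⁆ L₁) :
    IsSolvable (K.map f) :=
  K.range_comp_incl f ▸ (f.comp K.incl).isSolvable_range

theorem LieAlgebra.derivedSeries_le_ker (f : L →ₗ⁅R⁆ L₁) {m n : ℕ} (hnm : n ≤ m)
    (hn : derivedSeries R L₁ n = ⊥) : derivedSeries R L m ≤ f.ker := by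
  rw [← LieIdeal.map_eq_bot_iff, eq_bot_iff, ← hn]
  exact (LieIdeal.derivedSeries_map_le m).trans (derivedSeriesOfIdeal_antitone ⊤ hnm)

theorem LieAlgebra.isSolvable_of_ker_inf_ker_eq_bot (f : L →ₗ⁅R⁆ L₁) (g : L →ₗ⁅R⁆ L₂)
    [IsSolvable f.range] [IsSolvable g.range] (h : f.ker ⊓ g.ker = ⊥) : IsSolvable L := by
  obtain ⟨k, hk⟩ := IsSolvable.solvable R f.range
  obtain ⟨l, hl⟩ := IsSolvable.solvable R g.range
  refine IsSolvable.mk (k := max k l) (eq_bot_iff.mpr (h ▸ le_inf (fun x hx => ?_) fun x hx => ?_))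
  · exact congrArg Subtype.val (derivedSeries_le_ker f.rangeRestrict (le_max_left k l) hk hx)
  · exact congrArg Subtype.val (derivedSeries_le_ker g.rangeRestrict (le_max_right k l) hl hx)

theorem LieSubalgebra.isSolvable_of_isSolvable_map_fst_snd (K : LieSubalgebra R (L₁ × L₂))
    (h₁ : IsSolvable (K.map (LieHom.fst R L₁ L₂))) (h₂ : IsSolvable (K.map (LieHom.snd R L₁ L₂))) :
    IsSolvable K := by
  have : IsSolvable ((LieHom.fst R L₁ L₂).comp K.incl).range :=
    K.range_comp_incl (LieHom.fst R L₁ L₂) ▸ h₁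
  have : IsSolvable ((LieHom.snd R L₁ L₂).comp K.incl).range :=
    K.range_comp_incl (LieHom.snd R L₁ L₂) ▸ h₂
  refine isSolvable_of_ker_inf_ker_eq_bot ((LieHom.fst R L₁ L₂).comp K.incl)
    ((LieHom.snd R L₁ L₂).comp K.incl) ((LieSubmodule.eq_bot_iff _).mpr fun x hx => ?_)
  exact Subtype.ext (Prod.ext hx.1 hx.2)

end Solvable

section Solvabilizer

variable {F L L' : Type*} [Field F] [LieRing L] [LieAlgebra F L] [LieRing L'] [LieAlgebra F L']

theorem LieHom.map_mem_solvabilizerAlg (f : L →ₗ⁅F⁆ L') (hf : Function.Surjective f) {x : L}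
    (hx : x ∈ solvabilizerAlg F L) : f x ∈ solvabilizerAlg F L' := by
  intro z'
  obtain ⟨z, rfl⟩ := hf z'
  have := hx z
  rw [← Set.image_pair, ← LieSubalgebra.map_lieSpan]
  infer_instance

end Solvabilizer

theorem solvabilizerAlg_prod_general (F L₁ L₂ : Type*) [Field F]
    [LieRing L₁] [LieAlgebra F L₁] [LieRing L₂] [LieAlgebra F L₂] :
    solvabilizerAlg F (L₁ × L₂) = solvabilizerAlg F L₁ ×ˢ solvabilizerAlg F L₂ := by
  ext x
  refine ⟨fun hx => ?_, fun ⟨h₁, h₂⟩ z => ?_⟩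
  · exact ⟨(LieHom.fst F L₁ L₂).map_mem_solvabilizerAlg LieHom.fst_surjective hx,
      (LieHom.snd F L₁ L₂).map_mem_solvabilizerAlg LieHom.snd_surjective hx⟩
  · refine LieSubalgebra.isSolvable_of_isSolvable_map_fst_snd _ ?_ ?_
    · rw [LieSubalgebra.map_lieSpan, Set.image_pair]
      exact h₁ z.1
    · rw [LieSubalgebra.map_lieSpan, Set.image_pair]
      exact h₂ z.2

/-- The solvabilizer of a direct sum is the product of the solvabilizers. -/
theorem solvabilizerAlg_prod (F L₁ L₂ : Type*) [Field F]
    [LieRing L₁] [LieAlgebra F L₁] [LieRing L₂] [LieAlgebra F L₂]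
    [Module.Finite F L₁] [Module.Finite F L₂] :
    solvabilizerAlg F (L₁ × L₂) = solvabilizerAlg F L₁ ×ˢ solvabilizerAlg F L₂ :=
  solvabilizerAlg_prod_general F L₁ L₂
end

section
/- Let L₁ and L₂ be finite-dimensional Lie algebras over a field F and let φ : L₁ → L₂ be a Lie algebra homomorphism. Then for every x ∈ sol(L₁) and every z ∈ L₁, the Lie subalgebra of L₂ generated by {φ(x), φ(z)} is solvable; in particular if φ is surjective then φ(sol(L₁)) ⊆ sol(L₂). -/
namespace LieSubalgebra

variable {R L L₂ : Type*} [CommRing R] [LieRing L] [LieAlgebra R L]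
  [LieRing L₂] [LieAlgebra R L₂] (f : L →ₗ⁅R⁆ L₂)

theorem range_comp_incl_s12 (K : LieSubalgebra R L) : (f.comp K.incl).range = K.map f := by
  ext y
  simp [mem_map, LieHom.mem_range]

instance isSolvable_map_s12 (K : LieSubalgebra R L) [LieAlgebra.IsSolvable K] :
    LieAlgebra.IsSolvable (K.map f) := by
  rw [← range_comp_incl_s12]
  infer_instance

theorem isSolvable_lieSpan_image {s : Set L} [LieAlgebra.IsSolvable (lieSpan R L s)] :
    LieAlgebra.IsSolvable (lieSpan R L₂ (f '' s)) := by
  rw [← map_lieSpan]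
  infer_instance

end LieSubalgebra

theorem map_solvabilizer_subset_general (F L₁ L₂ : Type*) [Field F]
    [LieRing L₁] [LieAlgebra F L₁] [LieRing L₂] [LieAlgebra F L₂]
    (φ : L₁ →ₗ⁅F⁆ L₂) :
    (∀ x ∈ solvabilizerAlg F L₁, ∀ z : L₁,
        LieAlgebra.IsSolvable (LieSubalgebra.lieSpan F L₂ {φ x, φ z})) ∧
      (Function.Surjective φ → φ '' solvabilizerAlg F L₁ ⊆ solvabilizerAlg F L₂) := by
  have pair_image : ∀ x ∈ solvabilizerAlg F L₁, ∀ z : L₁,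
      LieAlgebra.IsSolvable (LieSubalgebra.lieSpan F L₂ {φ x, φ z}) := by
    intro x hx z
    have := hx z
    rw [← Set.image_pair]
    exact LieSubalgebra.isSolvable_lieSpan_image φ
  refine ⟨pair_image, fun hφ => ?_⟩
  rintro _ ⟨x, hx, rfl⟩ w
  obtain ⟨z, rfl⟩ := hφ w
  exact pair_image x hx z

theorem map_solvabilizer_subset (F L₁ L₂ : Type*) [Field F]
    [LieRing L₁] [LieAlgebra F L₁] [LieRing L₂] [LieAlgebra F L₂]
    [Module.Finite F L₁] [Module.Finite F L₂] (φ : L₁ →ₗ⁅F⁆ L₂) :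
    (∀ x ∈ solvabilizerAlg F L₁, ∀ z : L₁,
        LieAlgebra.IsSolvable (LieSubalgebra.lieSpan F L₂ {φ x, φ z})) ∧
      (Function.Surjective φ → φ '' solvabilizerAlg F L₁ ⊆ solvabilizerAlg F L₂) :=
  map_solvabilizer_subset_general F L₁ L₂ φ
end
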